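/- arXiv:1911.00095 — 5 statements merged into one kernel-verified Lean document; each statement's English description precedes it below -/
import Mathlib

section
/- Let Z ∈ C and n ∈ 𝒩. Suppose e ∈ ℝ and, for each facet F' of Γ₊(f) (compact or noncompact) such that F_n ∩ F' is a one-dimensional segment, a nonnegative real c_{F'} is given, such that e·ℓ_n + Σ_{F'} c_{F'}·ℓ_{F'} = 0 as linear functionals on ℝ³. Then e·m_n(Z) + Σ_{F' compact} c_{F'}·m_{F'}(Z) ≤ 0, where the last sum runs over the compact facets F' adjacent to F_n. (This expresses that C is contained in the Lipman cone.) -/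
open Pointwise

noncomputable section

/-- The support of a power series: the set of exponent vectors with nonzero coefficient. -/
def psSupp (f : MvPowerSeries (Fin 3) ℂ) : Set (Fin 3 →₀ ℕ) :=
  {u | MvPowerSeries.coeff u f ≠ 0}

/-- Embedding of exponent vectors into `ℝ³`. -/
def expR (u : Fin 3 →₀ ℕ) : Fin 3 → ℝ := fun i => (u i : ℝ)

/-- The Newton polyhedron `Γ₊(f) = conv(supp f + ℝ³₊)`. -/
def newtonPolyhedron (f : MvPowerSeries (Fin 3) ℂ) : Set (Fin 3 → ℝ) :=
  convexHull ℝ ((expR '' psSupp f) + {v : Fin 3 → ℝ | ∀ i, 0 ≤ v i})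

/-- Evaluation of an integral linear functional on `ℝ³`. -/
def leval (l : Fin 3 → ℤ) (x : Fin 3 → ℝ) : ℝ := ∑ i, (l i : ℝ) * x i

/-- A primitive integral vector: its coordinates have no nonunit common divisor. -/
def Primitive (l : Fin 3 → ℤ) : Prop := ∀ d : ℤ, (∀ i, d ∣ l i) → IsUnit d

/-- The set of minimizers of the functional `l` on `P`. -/
def minSet (l : Fin 3 → ℤ) (P : Set (Fin 3 → ℝ)) : Set (Fin 3 → ℝ) :=
  {x ∈ P | ∀ y ∈ P, leval l x ≤ leval l y}

/-- A compact facet of `P`: a compact two-dimensional exposed face. -/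
def IsCompactFacet (P F : Set (Fin 3 → ℝ)) : Prop :=
  IsExposed ℝ P F ∧ IsCompact F ∧ Module.finrank ℝ (vectorSpan ℝ F) = 2

/-- A facet of `P`: a two-dimensional exposed face (possibly noncompact). -/
def IsFacet (P F : Set (Fin 3 → ℝ)) : Prop :=
  IsExposed ℝ P F ∧ Module.finrank ℝ (vectorSpan ℝ F) = 2

/-- Adjacency: two faces are adjacent iff their intersection is a one-dimensional segment. -/
def SegAdj (F F' : Set (Fin 3 → ℝ)) : Prop :=
  Module.finrank ℝ (vectorSpan ℝ (F ∩ F')) = 1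

/-- `𝒩_A`: the set of vertices lying in `A` or adjacent (in the dual graph `Ḡ`)
to a vertex of `A`. -/
def nbhd {N : Type} (FF : N → Set (Fin 3 → ℝ)) (A : Set N) : Set N :=
  {n | n ∈ A ∨ ∃ a ∈ A, SegAdj (FF n) (FF a)}

/-- `Γ₊(Z) = {u ∈ ℝ³₊ : ℓ_n(u) ≥ m_n(Z) for all n ∈ 𝒩}`. -/
def GammaZ {N : Type} (ll : N → Fin 3 → ℤ) (Z : N → ℝ) : Set (Fin 3 → ℝ) :=
  {x | (∀ i, 0 ≤ x i) ∧ ∀ n, Z n ≤ leval (ll n) x}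

/-- `F_n(Z)`, the face of `Γ₊(Z)` where `ℓ_n = m_n(Z)`. -/
def FZ {N : Type} (ll : N → Fin 3 → ℤ) (Z : N → ℝ) (n : N) : Set (Fin 3 → ℝ) :=
  {x ∈ GammaZ ll Z | leval (ll n) x = Z n}

/-- `Γ₊^A(Z) = {u ∈ ℝ³₊ : ℓ_n(u) ≥ m_n(Z) for all n ∈ 𝒩_A}`. -/
def GammaZA {N : Type} (FF : N → Set (Fin 3 → ℝ)) (ll : N → Fin 3 → ℤ) (Z : N → ℝ)
    (A : Set N) : Set (Fin 3 → ℝ) :=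
  {x | (∀ i, 0 ≤ x i) ∧ ∀ n ∈ nbhd FF A, Z n ≤ leval (ll n) x}

/-- `F_a^A(Z)`, the face of `Γ₊^A(Z)` where `ℓ_a = m_a(Z)`. -/
def FZA {N : Type} (FF : N → Set (Fin 3 → ℝ)) (ll : N → Fin 3 → ℤ) (Z : N → ℝ)
    (A : Set N) (a : N) : Set (Fin 3 → ℝ) :=
  {x ∈ GammaZA FF ll Z A | leval (ll a) x = Z a}

/-- Membership in the cone `C`: (i) for every `n`, `F_n^{{n}}(Z) = F_n(Z) ≠ ∅`;
(ii) whenever `n, n'` are adjacent and `ρ·(F_n(f) ∩ F_{n'}(f)) + u ⊆ F_n(Z) ∩ F_{n'}(Z)`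
for some `ρ ≥ 0`, `u ∈ ℝ³`, then `ρ·F_n(f) + u ⊆ F_n(Z)`. -/
def memC {N : Type} (FF : N → Set (Fin 3 → ℝ)) (ll : N → Fin 3 → ℤ) (Z : N → ℝ) : Prop :=
  (∀ n, (FZ ll Z n).Nonempty ∧ FZA FF ll Z {n} n = FZ ll Z n) ∧
  (∀ n n', SegAdj (FF n) (FF n') → ∀ ρ : ℝ, 0 ≤ ρ → ∀ u : Fin 3 → ℝ,
     (fun x => ρ • x + u) '' (FF n ∩ FF n') ⊆ FZ ll Z n ∩ FZ ll Z n' →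
     (fun x => ρ • x + u) '' (FF n) ⊆ FZ ll Z n)

theorem leval_nonneg {l : Fin 3 → ℤ} {x : Fin 3 → ℝ} (hl : ∀ i, 0 ≤ l i) (hx : ∀ i, 0 ≤ x i) :
    0 ≤ leval l x :=
  Finset.sum_nonneg fun i _ => mul_nonneg (Int.cast_nonneg (hl i)) (hx i)

theorem sum_mul_le_sum_mul_leval_of_mem_GammaZ {N : Type} [Fintype N] {ll : N → Fin 3 → ℤ}
    {Z : N → ℝ} {x : Fin 3 → ℝ} (hx : x ∈ GammaZ ll Z) {c : N → ℝ} (hc : ∀ n, 0 ≤ c n) :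
    ∑ n, c n * Z n ≤ ∑ n, c n * leval (ll n) x :=
  Finset.sum_le_sum fun n _ => mul_le_mul_of_nonneg_left (hx.2 n) (hc n)

/-- On `F_n(Z)` the `ℓ_n`-term equals `e·m_n(Z)`, each compact term dominates `c·m(Z)`, and the
noncompact terms are nonnegative since `F_n(Z) ⊆ ℝ³₊`. -/
theorem lipman_inequality_of_mem_FZ {N J : Type} [Fintype N] [Fintype J]
    {ll : N → Fin 3 → ℤ} {ll' : J → Fin 3 → ℤ} {Z : N → ℝ} {n : N} {x : Fin 3 → ℝ}
    (hx : x ∈ FZ ll Z n) (hnn' : ∀ j i, 0 ≤ ll' j i) {e : ℝ} {c : N → ℝ} {d : J → ℝ}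
    (hcnn : ∀ n', 0 ≤ c n') (hdnn : ∀ j, 0 ≤ d j)
    (hlin : e * leval (ll n) x + (∑ n', c n' * leval (ll n') x) +
      (∑ j, d j * leval (ll' j) x) = 0) :
    e * Z n + ∑ n', c n' * Z n' ≤ 0 := by
  obtain ⟨hxΓ, hxn⟩ := hx
  have hcompact := sum_mul_le_sum_mul_leval_of_mem_GammaZ hxΓ hcnn
  have hnoncompact : 0 ≤ ∑ j, d j * leval (ll' j) x :=
    Finset.sum_nonneg fun j _ => mul_nonneg (hdnn j) (leval_nonneg (hnn' j) hxΓ.1)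
  rw [← hxn]
  linarith

/-- The noncompact facets adjacent to `F_n` are enumerated by `J`, with inward normals `ll'` and
coefficients `d`. -/
theorem cone_C_in_Lipman_cone_general
    (N : Type) [Fintype N]
    (FF : N → Set (Fin 3 → ℝ)) (ll : N → Fin 3 → ℤ)
    (Z : N → ℝ) (hZ : memC FF ll Z) (n : N)
    (J : Type) [Fintype J]
    (ll' : J → Fin 3 → ℤ)
    (hnn' : ∀ j i, 0 ≤ ll' j i)
    (e : ℝ) (c : N → ℝ) (d : J → ℝ)
    (hcnn : ∀ n', 0 ≤ c n') (hdnn : ∀ j, 0 ≤ d j)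
    (hlin : ∀ x : Fin 3 → ℝ,
      e * leval (ll n) x + (∑ n', c n' * leval (ll n') x) + (∑ j, d j * leval (ll' j) x) = 0) :
    e * Z n + ∑ n', c n' * Z n' ≤ 0 := by
  obtain ⟨x, hx⟩ := (hZ.1 n).1
  exact lipman_inequality_of_mem_FZ hx hnn' hcnn hdnn (hlin x)

/-- Let `Z ∈ C` and `n ∈ 𝒩`. Suppose `e ∈ ℝ` and, for each facet `F'` of
`Γ₊(f)` (compact or noncompact) such that `F_n ∩ F'` is a one-dimensional segment, a
nonnegative real `c_{F'}` is given, such that `e·ℓ_n + Σ_{F'} c_{F'}·ℓ_{F'} = 0` as linear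
functionals on `ℝ³`.  Then `e·m_n(Z) + Σ_{F' compact} c_{F'}·m_{F'}(Z) ≤ 0`.
The compact facets are enumerated by the finite type `N` (via `FF`), the noncompact
facets adjacent to `F_n` by the finite type `J` (via `G`); the coefficients `c_{F'}` are
given by `c : N → ℝ` (vanishing on non-adjacent compact facets) and `d : J → ℝ`. -/
theorem cone_C_in_Lipman_cone
    (f : MvPowerSeries (Fin 3) ℂ) (hf : f ≠ 0)
    (N : Type) [Fintype N]
    (FF : N → Set (Fin 3 → ℝ)) (ll : N → Fin 3 → ℤ)
    (hfacet : ∀ n, IsCompactFacet (newtonPolyhedron f) (FF n))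
    (hinj : Function.Injective FF)
    (hsurj : ∀ G', IsCompactFacet (newtonPolyhedron f) G' → ∃ n, FF n = G')
    (hprim : ∀ n, Primitive (ll n))
    (hpos : ∀ n i, 0 < ll n i)
    (hmin : ∀ n, minSet (ll n) (newtonPolyhedron f) = FF n)
    (Z : N → ℝ) (hZ : memC FF ll Z) (n : N)
    (J : Type) [Fintype J]
    (G : J → Set (Fin 3 → ℝ)) (ll' : J → Fin 3 → ℤ)
    (hGfacet : ∀ j, IsFacet (newtonPolyhedron f) (G j))
    (hGnc : ∀ j, ¬ IsCompact (G j))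
    (hGadj : ∀ j, SegAdj (FF n) (G j))
    (hGinj : Function.Injective G)
    (hGall : ∀ G', IsFacet (newtonPolyhedron f) G' → ¬ IsCompact G' →
      SegAdj (FF n) G' → ∃ j, G j = G')
    (hprim' : ∀ j, Primitive (ll' j))
    (hnn' : ∀ j i, 0 ≤ ll' j i)
    (hmin' : ∀ j, minSet (ll' j) (newtonPolyhedron f) = G j)
    (e : ℝ) (c : N → ℝ) (d : J → ℝ)
    (hcnn : ∀ n', 0 ≤ c n') (hdnn : ∀ j, 0 ≤ d j)
    (hc0 : ∀ n', ¬ SegAdj (FF n) (FF n') → c n' = 0)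
    (hlin : ∀ x : Fin 3 → ℝ,
      e * leval (ll n) x + (∑ n', c n' * leval (ll n') x) + (∑ j, d j * leval (ll' j) x) = 0) :
    e * Z n + ∑ n', c n' * Z n' ≤ 0 :=
  cone_C_in_Lipman_cone_general N FF ll Z hZ n J ll' hnn' e c d hcnn hdnn hlin
end
end

section
/- Let A ≅ ℝ² be an affine plane and ℓ₀, …, ℓ_s affine functions on A. Let P and Q be polygons given by the inequalities ℓ_i ≥ p_i and ℓ_i ≥ q_i respectively (i = 0, …, s), in such a way that p_i = min_P ℓ_i and q_i = min_Q ℓ_i; let P_i and Q_i be the sets of minimizers of ℓ_i on P and Q respectively. Assume Q ⊆ P and that Q₀ = P₀ is a segment of positive length. Take p₀' < p₀ such that the polygon P' defined by the inequalities ℓ₀ ≥ p₀' and ℓ_i ≥ p_i for i > 0 satisfies p₀' = min_{P'} ℓ₀, and such that the minimizer set P₀' of ℓ₀ on P' is a segment of positive length. Let φ : A → A be the unique direction-preserving affine isomorphism (a map of the form x ↦ ρ·x + u with ρ > 0, i.e. a homothety or translation) with φ(P₀) = P₀'. Then φ(Q) ⊆ P'. -/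
noncomputable section

/-- The polygon in the plane `ℝ²` cut out by the affine inequalities `ℓ i ≥ p i`. -/
def polyRegion {s : ℕ} (l : Fin (s + 1) → ((Fin 2 → ℝ) →ᵃ[ℝ] ℝ)) (p : Fin (s + 1) → ℝ) :
    Set (Fin 2 → ℝ) :=
  {x | ∀ i, p i ≤ l i x}

/-- The set of minimizers of `ℓ i` on the polygon cut out by `ℓ ≥ p`
(assuming `p i` is the minimal value of `ℓ i` there). -/
def polyFace {s : ℕ} (l : Fin (s + 1) → ((Fin 2 → ℝ) →ᵃ[ℝ] ℝ)) (p : Fin (s + 1) → ℝ)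
    (i : Fin (s + 1)) : Set (Fin 2 → ℝ) :=
  {x ∈ polyRegion l p | l i x = p i}

/-!
The polygon `P'` is convex and its slice at level `p₀` of `ℓ₀` is `P₀ = [a, b]`. For `x ∈ P` put
`s = (p₀ - p₀') / (ℓ₀ x - p₀') ∈ (0, 1]`. The points `A = (1 - s) a' + s x` and
`B = (1 - s) b' + s x`, with `a' = φ a`, `b' = φ b`, lie in `P'` at level `p₀`, hence on `[a, b]`:
`A = a + α (b - a)`, `B = a + β (b - a)`, and `β - α = (1 - s) ρ` because
`B - A = (1 - s) (b' - a') = (1 - s) ρ (b - a)` and `a ≠ b`. Solving `A` for `x` gives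
`φ x = ρ (1 - s) x + (1 - β) a' + α b'`, a convex combination of points of `P'`.
-/

open Set Function

section

variable {E : Type*} [AddCommGroup E] [Module ℝ E]

theorem Convex.smul_add_smul_add_smul_mem {C : Set E} (hC : Convex ℝ C) {x y z : E} (hx : x ∈ C)
    (hy : y ∈ C) (hz : z ∈ C) {α β γ : ℝ} (hα : 0 ≤ α) (hβ : 0 ≤ β) (hγ : 0 ≤ γ)
    (hsum : α + β + γ = 1) : α • x + β • y + γ • z ∈ C := by
  have h := hC.sum_mem (t := Finset.univ) (w := ![α, β, γ]) (z := ![x, y, z])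
    (by simp [Fin.forall_fin_succ, hα, hβ, hγ]) (by simpa [Fin.sum_univ_three] using hsum)
    (by simp [Fin.forall_fin_succ, hx, hy, hz])
  simpa [Fin.sum_univ_three, add_assoc] using h

theorem Convex.smul_add_mem_of_slice_subset_segment {C : Set E} (hC : Convex ℝ C)
    (ℓ : E →ᵃ[ℝ] ℝ) {c c' : ℝ} (hc : c' < c) {a b : E} (hab : a ≠ b)
    (hslice : C ∩ ℓ ⁻¹' {c} ⊆ segment ℝ a b) {ρ : ℝ} (hρ : 0 < ρ) (u : E)
    (ha : ρ • a + u ∈ C) (hb : ρ • b + u ∈ C) (hℓa : ℓ (ρ • a + u) = c')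
    (hℓb : ℓ (ρ • b + u) = c') {x : E} (hx : x ∈ C) (hxc : c ≤ ℓ x) : ρ • x + u ∈ C := by
  have hpos : 0 < ℓ x - c' := by linarith
  set s := (c - c') / (ℓ x - c') with hs
  have hs0 : 0 ≤ s := div_nonneg (by linarith) hpos.le
  have hs1 : s ≤ 1 := (div_le_one hpos).2 (by linarith)
  have hcut : ∀ v ∈ C, ℓ v = c' → ∃ θ ∈ Icc (0 : ℝ) 1, (1 - s) • v + s • x = a + θ • (b - a) := by
    intro v hv hℓv
    have hmem : (1 - s) • v + s • x ∈ C ∩ ℓ ⁻¹' {c} := by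
      refine ⟨hC hv hx (by linarith) hs0 (by ring), ?_⟩
      rw [mem_preimage, mem_singleton_iff, Convex.combo_affine_apply (by ring), hℓv, hs,
        smul_eq_mul, smul_eq_mul]
      field_simp
      ring
    obtain ⟨θ, hθ, h⟩ := segment_eq_image' ℝ a b ▸ hslice hmem
    exact ⟨θ, hθ, h.symm⟩
  obtain ⟨α, ⟨hα0, -⟩, hA⟩ := hcut _ ha hℓa
  obtain ⟨β, ⟨-, hβ1⟩, hB⟩ := hcut _ hb hℓb
  have hβ : β = α + (1 - s) * ρ := by
    refine smul_left_injective ℝ (sub_ne_zero.2 hab.symm) ?_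
    dsimp only
    linear_combination (norm := module) -hB + hA
  have hφx : ρ • x + u = (ρ * (1 - s)) • x + (1 - β) • (ρ • a + u) + α • (ρ • b + u) := by
    rw [hβ]
    linear_combination (norm := module) ρ • hA
  rw [hφx]
  exact hC.smul_add_smul_add_smul_mem hx ha hb (mul_nonneg hρ.le (by linarith)) (by linarith) hα0 (by linarith)

end

section

variable {s : ℕ} (l : Fin (s + 1) → ((Fin 2 → ℝ) →ᵃ[ℝ] ℝ)) (p : Fin (s + 1) → ℝ)

theorem convex_polyRegion : Convex ℝ (polyRegion l p) := by
  have h : polyRegion l p = ⋂ i, l i ⁻¹' Ici (p i) := by ext; simp [polyRegion]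
  exact h ▸ convex_iInter fun i => (convex_Ici (p i)).affine_preimage (l i)

variable {l p}

theorem polyRegion_subset_update {i : Fin (s + 1)} {c : ℝ} (hc : c ≤ p i) :
    polyRegion l p ⊆ polyRegion l (update p i c) := by
  intro x hx j
  rcases eq_or_ne j i with rfl | hj
  · simpa using hc.trans (hx j)
  · simpa [hj] using hx j

theorem mem_polyFace_of_mem_polyRegion_update {i : Fin (s + 1)} {c : ℝ} {x : Fin 2 → ℝ}
    (hx : x ∈ polyRegion l (update p i c)) (hxi : l i x = p i) : x ∈ polyFace l p i := by
  refine ⟨fun j => ?_, hxi⟩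
  rcases eq_or_ne j i with rfl | hj
  · exact hxi.ge
  · simpa [hj] using hx j

end

theorem homothety_polygon_lemma_general
    (s : ℕ) (l : Fin (s + 1) → ((Fin 2 → ℝ) →ᵃ[ℝ] ℝ))
    (p q : Fin (s + 1) → ℝ)
    (hQP : polyRegion l q ⊆ polyRegion l p)
    (hP0seg : ∃ a b : Fin 2 → ℝ, a ≠ b ∧ polyFace l p 0 = segment ℝ a b)
    (p0' : ℝ) (hp0' : p0' < p 0)
    (ρ : ℝ) (hρ : 0 < ρ) (u : Fin 2 → ℝ)
    (hφ : (fun x => ρ • x + u) '' polyFace l p 0 = polyFace l (Function.update p 0 p0') 0) :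
    (fun x => ρ • x + u) '' polyRegion l q ⊆ polyRegion l (Function.update p 0 p0') := by
  obtain ⟨a, b, hab, hface⟩ := hP0seg
  have hφface : ∀ y ∈ polyFace l p 0, ρ • y + u ∈ polyFace l (update p 0 p0') 0 :=
    fun y hy => hφ ▸ mem_image_of_mem _ hy
  obtain ⟨ha, hℓa⟩ := hφface a (hface ▸ left_mem_segment ℝ a b)
  obtain ⟨hb, hℓb⟩ := hφface b (hface ▸ right_mem_segment ℝ a b)
  rintro - ⟨x, hx, rfl⟩
  refine (convex_polyRegion l _).smul_add_mem_of_slice_subset_segment (l 0) hp0' hab ?_ hρ u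
    ha hb (by simpa using hℓa) (by simpa using hℓb) (polyRegion_subset_update hp0'.le (hQP hx))
    (hQP hx 0)
  exact fun z ⟨hz, hzc⟩ => hface ▸ mem_polyFace_of_mem_polyRegion_update hz hzc

/-- Let `A = ℝ²` and `ℓ₀, …, ℓ_s` affine functions on `A`.  Let `P` and `Q`
be polygons given by `ℓ_i ≥ p_i` resp. `ℓ_i ≥ q_i` with `p_i = min_P ℓ_i`, `q_i = min_Q ℓ_i`,
with minimizer sets `P_i`, `Q_i`.  Assume `Q ⊆ P` and `Q₀ = P₀` is a segment of positive
length.  Take `p₀' < p₀` so that the polygon `P'` given by `ℓ₀ ≥ p₀'`, `ℓ_i ≥ p_i` (`i > 0`)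
satisfies `p₀' = min_{P'} ℓ₀` and its minimizer set `P₀'` is a segment of positive length.
If `φ : x ↦ ρ·x + u` (with `ρ > 0`) is a direction-preserving affine isomorphism with
`φ(P₀) = P₀'`, then `φ(Q) ⊆ P'`. -/
theorem homothety_polygon_lemma
    (s : ℕ) (l : Fin (s + 1) → ((Fin 2 → ℝ) →ᵃ[ℝ] ℝ))
    (p q : Fin (s + 1) → ℝ)
    (hPcompact : IsCompact (polyRegion l p))
    (hQcompact : IsCompact (polyRegion l q))
    (hpmin : ∀ i, ∃ x ∈ polyRegion l p, l i x = p i)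
    (hqmin : ∀ i, ∃ x ∈ polyRegion l q, l i x = q i)
    (hQP : polyRegion l q ⊆ polyRegion l p)
    (hP0seg : ∃ a b : Fin 2 → ℝ, a ≠ b ∧ polyFace l p 0 = segment ℝ a b)
    (hQ0 : polyFace l q 0 = polyFace l p 0)
    (p0' : ℝ) (hp0' : p0' < p 0)
    (hP'compact : IsCompact (polyRegion l (Function.update p 0 p0')))
    (hP'min : ∃ x ∈ polyRegion l (Function.update p 0 p0'), l 0 x = p0')
    (hP0'seg : ∃ a b : Fin 2 → ℝ, a ≠ b ∧
      polyFace l (Function.update p 0 p0') 0 = segment ℝ a b)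
    (ρ : ℝ) (hρ : 0 < ρ) (u : Fin 2 → ℝ)
    (hφ : (fun x => ρ • x + u) '' polyFace l p 0 = polyFace l (Function.update p 0 p0') 0) :
    (fun x => ρ • x + u) '' polyRegion l q ⊆ polyRegion l (Function.update p 0 p0') :=
  homothety_polygon_lemma_general s l p q hQP hP0seg p0' hp0' ρ hρ u hφ
end
end

section
/- Let K be a field and i ∈ {1,2,3}. Let p and q be nonzero Laurent polynomials in three variables over K (finitely supported functions ℤ³ → K with convolution product). Assume supp(p) ⊆ ℕ³, that p has a term whose exponent vector has i-th coordinate equal to 0, and that every exponent vector in supp(p·q) has nonnegative i-th coordinate. Then every exponent vector in supp(q) has nonnegative i-th coordinate. -/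
/-!
Grade `K[ℤ³]` by the `i`-th coordinate of the exponent. If every exponent of `p` has degree
`≥ s` and every exponent of `q` degree `≥ t`, the coefficients of `p * q` in degree `s + t` are
those of the product of the components of `p` and `q` of degrees `s` and `t`; this product is
nonzero because `K[ℤ³]` is a domain. For the theorem, `p` has lowest degree `0`; if `q` had a
negative lowest degree `m`, then `p * q` would have an exponent of degree `m < 0`.
-/

namespace AddMonoidAlgebra

variable {R A T : Type*} [Semiring R]

theorem coeff_mul_eq_zero_of_forall_add_ne [Add A] {f g : AddMonoidAlgebra R A} {v : A}
    (h : ∀ a ∈ f.coeff.support, ∀ b ∈ g.coeff.support, a + b ≠ v) :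
    (f * g).coeff v = 0 := by
  classical
  by_contra hv
  obtain ⟨a, ha, b, hb, hab⟩ :=
    Finset.mem_add.mp (support_coeff_mul_subset f g (Finsupp.mem_support_iff.mpr hv))
  exact h a ha b hb hab

open Classical in
noncomputable def degreeComponent (D : A → T) (t : T) (p : AddMonoidAlgebra R A) :
    AddMonoidAlgebra R A :=
  ofCoeff (p.coeff.filter (D · = t))

theorem mem_support_degreeComponent {D : A → T} {t : T} {p : AddMonoidAlgebra R A} {a : A} :
    a ∈ (degreeComponent D t p).coeff.support ↔ a ∈ p.coeff.support ∧ D a = t := by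
  classical
  rw [degreeComponent, coeff_ofCoeff, Finsupp.support_filter, Finset.mem_filter]

theorem degreeComponent_ne_zero {D : A → T} {t : T} {p : AddMonoidAlgebra R A} {a : A}
    (ha : a ∈ p.coeff.support) (hat : D a = t) : degreeComponent D t p ≠ 0 := by
  intro h
  have := (mem_support_degreeComponent (D := D)).mpr ⟨ha, hat⟩
  simp [h] at this

variable [AddMonoid A] [AddCommMonoid T] [PartialOrder T] [IsOrderedCancelAddMonoid T]
  {D : A →+ T}

theorem coeff_mul_of_map_eq_add {p q : AddMonoidAlgebra R A} {s t : T}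
    (hp : ∀ a ∈ p.coeff.support, s ≤ D a) (hq : ∀ b ∈ q.coeff.support, t ≤ D b)
    {v : A} (hv : D v = s + t) :
    (p * q).coeff v = (degreeComponent D s p * degreeComponent D t q).coeff v := by
  classical
  set p' : AddMonoidAlgebra R A := ofCoeff (p.coeff.filter (D · ≠ s))
  set q' : AddMonoidAlgebra R A := ofCoeff (q.coeff.filter (D · ≠ t))
  have hpp' : degreeComponent D s p + p' = p :=
    coeff_injective (Finsupp.filter_add_filter_not p.coeff _)
  have hqq' : degreeComponent D t q + q' = q :=
    coeff_injective (Finsupp.filter_add_filter_not q.coeff _)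
  have lowest {a b : A} (ha : a ∈ p.coeff.support) (hb : b ∈ q.coeff.support)
      (hab : a + b = v) : s = D a ∧ t = D b :=
    (add_eq_add_iff_eq_and_eq (hp a ha) (hq b hb)).mp (by rw [← map_add, hab, hv])
  have hzero_q' : (degreeComponent D s p * q').coeff v = 0 := by
    refine coeff_mul_eq_zero_of_forall_add_ne fun a ha b hb hab => ?_
    rw [mem_support_degreeComponent] at ha
    rw [coeff_ofCoeff, Finsupp.support_filter, Finset.mem_filter] at hb
    exact hb.2 (lowest ha.1 hb.1 hab).2.symm
  have hzero_p' : (p' * q).coeff v = 0 := by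
    refine coeff_mul_eq_zero_of_forall_add_ne fun a ha b hb hab => ?_
    rw [coeff_ofCoeff, Finsupp.support_filter, Finset.mem_filter] at ha
    exact ha.2 (lowest ha.1 hb hab).1.symm
  have hsplit : p * q = degreeComponent D s p * degreeComponent D t q +
      (degreeComponent D s p * q' + p' * q) := by
    rw [← add_assoc, ← mul_add, hqq', ← add_mul, hpp']
  rw [hsplit, coeff_add, Finsupp.add_apply, coeff_add, Finsupp.add_apply, hzero_q', hzero_p',
    add_zero, add_zero]

theorem exists_mem_support_mul_map_eq_add [NoZeroDivisors (AddMonoidAlgebra R A)]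
    {p q : AddMonoidAlgebra R A} {s t : T}
    (hp : ∀ a ∈ p.coeff.support, s ≤ D a) (hq : ∀ b ∈ q.coeff.support, t ≤ D b)
    (hps : ∃ a ∈ p.coeff.support, D a = s) (hqt : ∃ b ∈ q.coeff.support, D b = t) :
    ∃ v ∈ (p * q).coeff.support, D v = s + t := by
  classical
  obtain ⟨a, ha, has⟩ := hps
  obtain ⟨b, hb, hbt⟩ := hqt
  have hne : degreeComponent D s p * degreeComponent D t q ≠ 0 :=
    mul_ne_zero (degreeComponent_ne_zero ha has) (degreeComponent_ne_zero hb hbt)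
  obtain ⟨v, hv⟩ := Finsupp.support_nonempty_iff.mpr (mt coeff_eq_zero.mp hne)
  have hDv : D v = s + t := by
    obtain ⟨a', ha', b', hb', rfl⟩ := Finset.mem_add.mp (support_coeff_mul_subset _ _ hv)
    rw [map_add, (mem_support_degreeComponent.mp ha').2, (mem_support_degreeComponent.mp hb').2]
  refine ⟨v, ?_, hDv⟩
  rwa [Finsupp.mem_support_iff, coeff_mul_of_map_eq_add hp hq hDv, ← Finsupp.mem_support_iff]

end AddMonoidAlgebra

theorem laurent_quotient_nonneg_coordinate_general
    (K : Type) [Field K] (i : Fin 3)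
    (p q : AddMonoidAlgebra K (Fin 3 → ℤ))
    (hpN : ∀ u ∈ p.coeff.support, ∀ j, 0 ≤ u j)
    (hpi : ∃ u ∈ p.coeff.support, u i = 0)
    (hpq : ∀ u ∈ (p * q).coeff.support, 0 ≤ u i) :
    ∀ u ∈ q.coeff.support, 0 ≤ u i := by
  intro u hu
  obtain ⟨b, hb, hb_min⟩ := q.coeff.support.exists_min_image (· i) ⟨u, hu⟩
  obtain ⟨v, hv, hvi⟩ := AddMonoidAlgebra.exists_mem_support_mul_map_eq_add
    (D := Pi.evalAddMonoidHom (fun _ => ℤ) i) (s := 0) (t := b i)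
    (fun a ha => hpN a ha i) hb_min hpi ⟨b, hb, rfl⟩
  calc 0 ≤ v i := hpq v hv
    _ = b i := by simpa using hvi
    _ ≤ u i := hb_min u hu

/-- Let `K` be a field and `i ∈ {1,2,3}`.  Let `p, q` be nonzero Laurent
polynomials in three variables over `K` (elements of the monoid algebra `K[ℤ³]`).
Assume `supp(p) ⊆ ℕ³`, that `p` has a term whose exponent vector has `i`-th coordinate
equal to `0`, and that every exponent vector in `supp(p·q)` has nonnegative `i`-th
coordinate.  Then every exponent vector in `supp(q)` has nonnegative `i`-th coordinate. -/
theorem laurent_quotient_nonneg_coordinate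
    (K : Type) [Field K] (i : Fin 3)
    (p q : AddMonoidAlgebra K (Fin 3 → ℤ))
    (hp : p ≠ 0) (hq : q ≠ 0)
    (hpN : ∀ u ∈ p.coeff.support, ∀ j, 0 ≤ u j)
    (hpi : ∃ u ∈ p.coeff.support, u i = 0)
    (hpq : ∀ u ∈ (p * q).coeff.support, 0 ≤ u i) :
    ∀ u ∈ q.coeff.support, 0 ≤ u i :=
  laurent_quotient_nonneg_coordinate_general K i p q hpN hpi hpq
end

section
/- Let f ∈ ℂ[[x,y,z]] be nonzero, and let n ∈ 𝒩 index a compact facet F_n of Γ₊(f) such that for each i ∈ {1,2,3} there is a point u ∈ supp(f) with ℓ_n(u) = ŵt_n(f) and u_i = 0 (i.e. F_n intersects all three coordinate hyperplanes). Let g ∈ ℂ[[x,y,z]] be nonzero and suppose that the principal part g_n is divisible by f_n in the ring of Laurent polynomials, with quotient h = g_n/f_n. Then h is an honest polynomial, i.e. supp(h) ⊆ ℕ³, and either g = h·f or ŵt_n(g − h·f) > ŵt_n(g). -/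
open Pointwise

noncomputable section

open scoped Classical

/-- The value of the integral functional `l` on an exponent vector `u ∈ ℕ³`. -/
def ldot (l : Fin 3 → ℤ) (u : Fin 3 →₀ ℕ) : ℤ := ∑ i, l i * (u i : ℤ)

/-- The weight `ŵt_l(h) = min {l·u : u ∈ supp h}` of a (nonzero) power series. -/
def wtPS (l : Fin 3 → ℤ) (h : MvPowerSeries (Fin 3) ℂ) : ℤ :=
  sInf (ldot l '' psSupp h)

/-- The coefficients of the principal part `h_l` of a power series `h` with respect to
the weight `l`: the terms of `h` of minimal `l`-weight, viewed as a Laurent polynomial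
coefficient function on `ℤ³`. -/
def ppCoeff (l : Fin 3 → ℤ) (h : MvPowerSeries (Fin 3) ℂ) : (Fin 3 → ℤ) → ℂ :=
  fun v =>
    if (∀ i, 0 ≤ v i) ∧ (∑ i, l i * v i) = wtPS l h then
      MvPowerSeries.coeff (Finsupp.equivFunOnFinite.symm fun i => (v i).toNat) h
    else 0

/-- Convolution of a coefficient function `p : ℤ³ → ℂ` with a Laurent polynomial `h`;
this is the coefficient function of the Laurent product `p·h`. -/
def convMul (p : (Fin 3 → ℤ) → ℂ) (h : AddMonoidAlgebra ℂ (Fin 3 → ℤ)) :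
    (Fin 3 → ℤ) → ℂ :=
  fun v => ∑ u ∈ h.coeff.support, h.coeff u * p (v - u)

/-- A Laurent polynomial whose support lies in `ℕ³`, viewed as a power series. -/
def laurentToPS (h : AddMonoidAlgebra ℂ (Fin 3 → ℤ)) : MvPowerSeries (Fin 3) ℂ :=
  fun d => h.coeff fun i => (d i : ℤ)

/-!
Let `F` be the principal part `f_n`, viewed as a Laurent polynomial, so that `g_n = h F`. For an
additive functional `φ` on `ℤ³`, the `φ`-minimal parts of two Laurent polynomials have a nonzero
product (a unique-sum argument), so `min_φ (h F) = min_φ h + min_φ F` on supports. For `φ` a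
coordinate, `min_φ F = 0` because `F_n` meets every coordinate plane, while `g_n` has exponents in
`ℕ³`; hence so does `h`. For `φ = ±ℓ_n` it shows that `h` is `ℓ_n`-homogeneous of weight
`ŵt_n(g) - ŵt_n(f)`. Consequently, in weights at most `ŵt_n(g)` the product `h f` only involves
`f_n`, and there its coefficients are those of `h f_n = g_n`, i.e. those of `g`.
-/

namespace AddMonoidAlgebra

variable {R A Γ : Type*} [Semiring R] [AddZeroClass A]
  [AddCommMonoid Γ] [LinearOrder Γ] [IsOrderedCancelAddMonoid Γ] (φ : A →+ Γ) {a b : R[A]}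

theorem exists_mem_support_mul_map_eq_add_s6 [NoZeroDivisors R] [UniqueSums A] {a₀ b₀ : A}
    (ha₀ : a₀ ∈ a.coeff.support) (ha : ∀ x ∈ a.coeff.support, φ a₀ ≤ φ x)
    (hb₀ : b₀ ∈ b.coeff.support) (hb : ∀ y ∈ b.coeff.support, φ b₀ ≤ φ y) :
    ∃ v ∈ (a * b).coeff.support, φ v = φ a₀ + φ b₀ := by
  obtain ⟨x₀, hx₀, y₀, hy₀, huniq⟩ := UniqueSums.uniqueAdd_of_nonempty
    (A := a.coeff.support.filter (φ · = φ a₀)) (B := b.coeff.support.filter (φ · = φ b₀))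
    ⟨a₀, Finset.mem_filter.2 ⟨ha₀, rfl⟩⟩ ⟨b₀, Finset.mem_filter.2 ⟨hb₀, rfl⟩⟩
  rw [Finset.mem_filter] at hx₀ hy₀
  -- any decomposition of `x₀ + y₀` must use minimizers of `φ` on both supports
  have huniq' : UniqueAdd a.coeff.support b.coeff.support x₀ y₀ := by
    intro x y hx hy hxy
    have hlevel := (add_eq_add_iff_eq_and_eq (ha x hx) (hb y hy)).1 <| by
      rw [← hx₀.2, ← hy₀.2, ← map_add, ← map_add, hxy]
    exact huniq (Finset.mem_filter.2 ⟨hx, hlevel.1.symm⟩)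
      (Finset.mem_filter.2 ⟨hy, hlevel.2.symm⟩) hxy
  refine ⟨x₀ + y₀, ?_, by rw [map_add, hx₀.2, hy₀.2]⟩
  rw [Finsupp.mem_support_iff, coeff_mul_add_of_uniqueAdd huniq']
  exact mul_ne_zero (Finsupp.mem_support_iff.1 hx₀.1) (Finsupp.mem_support_iff.1 hy₀.1)

theorem le_map_add_of_forall_mem_support_mul [NoZeroDivisors R] [UniqueSums A] {m : Γ} {b₀ : A}
    (hab : ∀ v ∈ (a * b).coeff.support, m ≤ φ v)
    (hb₀ : b₀ ∈ b.coeff.support) (hb : ∀ y ∈ b.coeff.support, φ b₀ ≤ φ y)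
    {x : A} (hx : x ∈ a.coeff.support) : m ≤ φ x + φ b₀ := by
  obtain ⟨a₀, ha₀, ha⟩ := a.coeff.support.exists_min_image φ ⟨x, hx⟩
  obtain ⟨v, hv, hφv⟩ := exists_mem_support_mul_map_eq_add_s6 φ ha₀ ha hb₀ hb
  calc m ≤ φ v := hab v hv
    _ = φ a₀ + φ b₀ := hφv
    _ ≤ φ x + φ b₀ := add_le_add_left (ha x hx) _

end AddMonoidAlgebra

open MvPowerSeries

def castExp (d : Fin 3 →₀ ℕ) : Fin 3 → ℤ := fun i => d i

def truncExp (v : Fin 3 → ℤ) : Fin 3 →₀ ℕ := Finsupp.equivFunOnFinite.symm fun i => (v i).toNat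

def coeffInt (f : MvPowerSeries (Fin 3) ℂ) (v : Fin 3 → ℤ) : ℂ :=
  if ∀ i, 0 ≤ v i then coeff (truncExp v) f else 0

theorem truncExp_apply (v : Fin 3 → ℤ) (i : Fin 3) : truncExp v i = (v i).toNat := rfl

theorem truncExp_castExp (d : Fin 3 →₀ ℕ) : truncExp (castExp d) = d := by
  ext i; simp [truncExp_apply, castExp]

theorem castExp_truncExp {v : Fin 3 → ℤ} (hv : ∀ i, 0 ≤ v i) : castExp (truncExp v) = v := by
  funext i; simp [truncExp_apply, castExp, Int.toNat_of_nonneg (hv i)]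

theorem dotProduct_castExp (l : Fin 3 → ℤ) (d : Fin 3 →₀ ℕ) : l ⬝ᵥ castExp d = ldot l d := rfl

theorem coeffInt_castExp (f : MvPowerSeries (Fin 3) ℂ) (d : Fin 3 →₀ ℕ) :
    coeffInt f (castExp d) = coeff d f := by
  simp [coeffInt, castExp, truncExp_castExp]

theorem coeffInt_castExp_sub (f : MvPowerSeries (Fin 3) ℂ) (d : Fin 3 →₀ ℕ) {u : Fin 3 → ℤ}
    (hu : ∀ i, 0 ≤ u i) :
    coeffInt f (castExp d - u) = if truncExp u ≤ d then coeff (d - truncExp u) f else 0 := by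
  have hle : (∀ i, 0 ≤ (castExp d - u) i) ↔ truncExp u ≤ d := by
    simp only [Finsupp.le_def, Pi.sub_apply, castExp, truncExp_apply]
    exact forall_congr' fun i => by have := hu i; omega
  have htrunc_sub : truncExp (castExp d - u) = d - truncExp u := by
    ext i
    simp only [truncExp_apply, Pi.sub_apply, castExp, Finsupp.coe_tsub]
    have := hu i
    omega
  simp only [coeffInt, htrunc_sub]
  exact if_congr hle rfl rfl

theorem laurentToPS_eq_sum {h : AddMonoidAlgebra ℂ (Fin 3 → ℤ)}
    (hh : ∀ u ∈ h.coeff.support, ∀ i, 0 ≤ u i) :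
    laurentToPS h = ∑ u ∈ h.coeff.support, monomial (truncExp u) (h.coeff u) := by
  ext d
  rw [map_sum]
  have hcond : ∀ u ∈ h.coeff.support, (d = truncExp u ↔ castExp d = u) := fun u hu => by
    constructor
    · rintro rfl
      exact castExp_truncExp (hh u hu)
    · rintro rfl
      exact (truncExp_castExp d).symm
  simp only [coeff_monomial]
  rw [Finset.sum_congr rfl fun u hu => if_congr (hcond u hu) rfl rfl, Finset.sum_ite_eq]
  split_ifs with hd
  · rfl
  · exact Finsupp.notMem_support_iff.1 hd

theorem coeff_laurentToPS_mul {h : AddMonoidAlgebra ℂ (Fin 3 → ℤ)}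
    (hh : ∀ u ∈ h.coeff.support, ∀ i, 0 ≤ u i) (f : MvPowerSeries (Fin 3) ℂ) (d : Fin 3 →₀ ℕ) :
    coeff d (laurentToPS h * f) = convMul (coeffInt f) h (castExp d) := by
  rw [laurentToPS_eq_sum hh, Finset.sum_mul, map_sum, convMul]
  refine Finset.sum_congr rfl fun u hu => ?_
  rw [coeff_monomial_mul, coeffInt_castExp_sub f d (hh u hu), mul_ite, mul_zero]

section PrincipalPart

variable {l : Fin 3 → ℤ} {f : MvPowerSeries (Fin 3) ℂ}

theorem bddBelow_ldot_image_psSupp (hl : ∀ i, 0 ≤ l i) : BddBelow (ldot l '' psSupp f) :=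
  ⟨0, by
    rintro _ ⟨u, -, rfl⟩
    exact Finset.sum_nonneg fun i _ => mul_nonneg (hl i) (Int.natCast_nonneg _)⟩

theorem wtPS_le_ldot (hl : ∀ i, 0 ≤ l i) {u : Fin 3 →₀ ℕ} (hu : u ∈ psSupp f) :
    wtPS l f ≤ ldot l u :=
  csInf_le (bddBelow_ldot_image_psSupp hl) ⟨u, hu, rfl⟩

theorem exists_ldot_eq_wtPS (hl : ∀ i, 0 ≤ l i) (hf : f ≠ 0) :
    ∃ u ∈ psSupp f, ldot l u = wtPS l f := by
  have hne : (psSupp f).Nonempty := by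
    contrapose! hf
    ext u
    simpa [psSupp] using Set.eq_empty_iff_forall_notMem.1 hf u
  exact Int.csInf_mem (hne.image _) (bddBelow_ldot_image_psSupp hl)

theorem ppCoeff_eq_coeffInt (hl : ∀ i, 0 ≤ l i) {v : Fin 3 → ℤ} (hv : l ⬝ᵥ v ≤ wtPS l f) :
    ppCoeff l f v = coeffInt f v := by
  rcases hv.lt_or_eq with hlt | heq
  · have hzero : coeffInt f v = 0 := by
      rw [coeffInt, ite_eq_right_iff]
      intro hnonneg
      by_contra hne
      have := wtPS_le_ldot hl (u := truncExp v) hne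
      rw [← dotProduct_castExp, castExp_truncExp hnonneg] at this
      omega
    rw [hzero, ppCoeff, if_neg fun hc => hlt.ne hc.2]
  · exact if_congr (and_iff_left heq) rfl rfl

theorem nonneg_and_dotProduct_eq_of_ppCoeff_ne_zero {v : Fin 3 → ℤ} (hv : ppCoeff l f v ≠ 0) :
    (∀ i, 0 ≤ v i) ∧ l ⬝ᵥ v = wtPS l f := by
  by_contra hc
  exact hv (if_neg hc)

theorem finite_support_ppCoeff (hl : ∀ i, 0 < l i) : (Function.support (ppCoeff l f)).Finite := by
  refine (Set.finite_Icc (0 : Fin 3 → ℤ) (fun _ => wtPS l f)).subset fun v hv => ?_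
  obtain ⟨hnonneg, hlevel⟩ := nonneg_and_dotProduct_eq_of_ppCoeff_ne_zero hv
  refine ⟨hnonneg, fun i => ?_⟩
  calc v i ≤ l i * v i := le_mul_of_one_le_left (hnonneg i) (hl i)
    _ ≤ l ⬝ᵥ v := Finset.single_le_sum (f := fun j => l j * v j)
        (fun j _ => mul_nonneg (hl j).le (hnonneg j)) (Finset.mem_univ i)
    _ = wtPS l f := hlevel

theorem exists_coeff_eq_ppCoeff (hl : ∀ i, 0 < l i) (f : MvPowerSeries (Fin 3) ℂ) :
    ∃ F : AddMonoidAlgebra ℂ (Fin 3 → ℤ), ⇑F.coeff = ppCoeff l f :=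
  ⟨.ofCoeff (Finsupp.ofSupportFinite _ (finite_support_ppCoeff hl)), rfl⟩

end PrincipalPart

theorem coeff_mul_eq_convMul (h F : AddMonoidAlgebra ℂ (Fin 3 → ℤ)) :
    ⇑(h * F).coeff = convMul F.coeff h := by
  funext v
  rw [convMul, AddMonoidAlgebra.coeff_mul_apply_left, Finsupp.sum]
  simp_rw [neg_add_eq_sub]

section PrincipalPartQuotient

variable {l : Fin 3 → ℤ} {f g : MvPowerSeries (Fin 3) ℂ} {h F : AddMonoidAlgebra ℂ (Fin 3 → ℤ)}

theorem nonneg_and_dotProduct_eq_of_mem_support {P : AddMonoidAlgebra ℂ (Fin 3 → ℤ)}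
    (hP : ⇑P.coeff = ppCoeff l f) {v : Fin 3 → ℤ} (hv : v ∈ P.coeff.support) :
    (∀ i, 0 ≤ v i) ∧ l ⬝ᵥ v = wtPS l f :=
  nonneg_and_dotProduct_eq_of_ppCoeff_ne_zero (hP ▸ Finsupp.mem_support_iff.1 hv)

theorem castExp_mem_support (hl : ∀ i, 0 ≤ l i) (hF : ⇑F.coeff = ppCoeff l f)
    {u : Fin 3 →₀ ℕ} (hu : u ∈ psSupp f) (hlevel : ldot l u = wtPS l f) :
    castExp u ∈ F.coeff.support := by
  rw [Finsupp.mem_support_iff, hF, ppCoeff_eq_coeffInt hl (dotProduct_castExp l u ▸ hlevel.le),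
    coeffInt_castExp]
  exact hu

theorem quotient_support_nonneg (hl : ∀ i, 0 ≤ l i) (hF : ⇑F.coeff = ppCoeff l f)
    (hGF : ⇑(h * F).coeff = ppCoeff l g)
    (haxes : ∀ i, ∃ u ∈ psSupp f, ldot l u = wtPS l f ∧ u i = 0) :
    ∀ u ∈ h.coeff.support, ∀ i, 0 ≤ u i := by
  intro u hu i
  obtain ⟨b, hb, hblevel, hbi⟩ := haxes i
  have hφb : Pi.evalAddMonoidHom (fun _ => ℤ) i (castExp b) = 0 := by
    simp [castExp, hbi]
  have := AddMonoidAlgebra.le_map_add_of_forall_mem_support_mul (Pi.evalAddMonoidHom _ i)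
    (m := 0) (fun v hv => (nonneg_and_dotProduct_eq_of_mem_support hGF hv).1 i)
    (castExp_mem_support hl hF hb hblevel)
    (fun y hy => hφb ▸ (nonneg_and_dotProduct_eq_of_mem_support hF hy).1 i) hu
  simpa [hφb] using this

theorem quotient_support_dotProduct_eq (hl : ∀ i, 0 ≤ l i) (hF : ⇑F.coeff = ppCoeff l f)
    (hGF : ⇑(h * F).coeff = ppCoeff l g) (hf : f ≠ 0) :
    ∀ u ∈ h.coeff.support, l ⬝ᵥ u = wtPS l g - wtPS l f := by
  intro u hu
  obtain ⟨b, hb, hblevel⟩ := exists_ldot_eq_wtPS hl hf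
  have hbF := castExp_mem_support hl hF hb hblevel
  have hFlevel (y) (hy : y ∈ F.coeff.support) : l ⬝ᵥ y = l ⬝ᵥ castExp b :=
    (nonneg_and_dotProduct_eq_of_mem_support hF hy).2.trans hblevel.symm
  have hGlevel (v) (hv : v ∈ (h * F).coeff.support) : l ⬝ᵥ v = wtPS l g :=
    (nonneg_and_dotProduct_eq_of_mem_support hGF hv).2
  let φ : (Fin 3 → ℤ) →+ ℤ := AddMonoidHom.mk' (l ⬝ᵥ ·) (dotProduct_add l)
  have hlower := AddMonoidAlgebra.le_map_add_of_forall_mem_support_mul φ (m := wtPS l g)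
    (fun v hv => (hGlevel v hv).ge) hbF (fun y hy => (hFlevel y hy).ge) hu
  have hupper := AddMonoidAlgebra.le_map_add_of_forall_mem_support_mul (-φ) (m := -wtPS l g)
    (fun v hv => by simp [φ, hGlevel v hv]) hbF (fun y hy => by simp [φ, hFlevel y hy]) hu
  simp only [AddMonoidHom.neg_apply, φ, AddMonoidHom.mk'_apply, dotProduct_castExp] at hlower hupper
  omega

end PrincipalPartQuotient

theorem coeff_laurentToPS_mul_eq_coeff {l : Fin 3 → ℤ} {f g : MvPowerSeries (Fin 3) ℂ}
    {h : AddMonoidAlgebra ℂ (Fin 3 → ℤ)} (hl : ∀ i, 0 ≤ l i)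
    (hnonneg : ∀ u ∈ h.coeff.support, ∀ i, 0 ≤ u i)
    (hlevel : ∀ u ∈ h.coeff.support, l ⬝ᵥ u = wtPS l g - wtPS l f)
    (hdiv : ppCoeff l g = convMul (ppCoeff l f) h) {d : Fin 3 →₀ ℕ} (hd : ldot l d ≤ wtPS l g) :
    coeff d (laurentToPS h * f) = coeff d g :=
  calc coeff d (laurentToPS h * f) = convMul (coeffInt f) h (castExp d) :=
        coeff_laurentToPS_mul hnonneg f d
    _ = convMul (ppCoeff l f) h (castExp d) := Finset.sum_congr rfl fun u hu => by
        rw [ppCoeff_eq_coeffInt hl (by rw [dotProduct_sub, hlevel u hu, dotProduct_castExp]; omega)]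
    _ = ppCoeff l g (castExp d) := (congrFun hdiv _).symm
    _ = coeffInt g (castExp d) := ppCoeff_eq_coeffInt hl (by rwa [dotProduct_castExp])
    _ = coeff d g := coeffInt_castExp g d

theorem principal_part_division_general
    (f : MvPowerSeries (Fin 3) ℂ)
    (l : Fin 3 → ℤ)
    (hpos : ∀ i, 0 < l i)
    (haxes : ∀ i : Fin 3, ∃ u ∈ psSupp f, ldot l u = wtPS l f ∧ u i = 0)
    (g : MvPowerSeries (Fin 3) ℂ)
    (h : AddMonoidAlgebra ℂ (Fin 3 → ℤ))
    (hdiv : ppCoeff l g = convMul (ppCoeff l f) h) :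
    (∀ u ∈ h.coeff.support, ∀ i, 0 ≤ u i) ∧
      (g = laurentToPS h * f ∨ wtPS l g < wtPS l (g - laurentToPS h * f)) := by
  have hl i : 0 ≤ l i := (hpos i).le
  have hf : f ≠ 0 := by
    rintro rfl
    obtain ⟨u, hu, -⟩ := haxes 0
    exact hu (map_zero _)
  obtain ⟨F, hF⟩ := exists_coeff_eq_ppCoeff hpos f
  have hGF : ⇑(h * F).coeff = ppCoeff l g := by rw [coeff_mul_eq_convMul, hF, hdiv]
  have hnonneg := quotient_support_nonneg hl hF hGF haxes
  have hlevel := quotient_support_dotProduct_eq hl hF hGF hf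
  refine ⟨hnonneg, or_iff_not_imp_left.2 fun hne => ?_⟩
  obtain ⟨u, hu, hwt⟩ := exists_ldot_eq_wtPS hl (sub_ne_zero.2 hne)
  rw [← hwt]
  by_contra! hle
  exact hu (by rw [map_sub, coeff_laurentToPS_mul_eq_coeff hl hnonneg hlevel hdiv hle, sub_self])

/-- Let `f ∈ ℂ[[x,y,z]]` be nonzero and let `n ∈ 𝒩` index a compact facet
`F_n` of `Γ₊(f)` (with primitive inward normal `l`) intersecting all three coordinate
hyperplanes, i.e. for each `i` there is `u ∈ supp f` with `ℓ_n(u) = ŵt_n(f)` and `u_i = 0`.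
Let `g ∈ ℂ[[x,y,z]]` be nonzero and suppose the principal part `g_n` is divisible by `f_n`
in the Laurent polynomial ring, with quotient `h = g_n/f_n`.  Then `h` is an honest
polynomial (`supp h ⊆ ℕ³`) and either `g = h·f` or `ŵt_n(g − h·f) > ŵt_n(g)`. -/
theorem principal_part_division
    (f : MvPowerSeries (Fin 3) ℂ) (hf : f ≠ 0)
    (l : Fin 3 → ℤ)
    (hprim : Primitive l) (hpos : ∀ i, 0 < l i)
    (hfacet : IsCompactFacet (newtonPolyhedron f) (minSet l (newtonPolyhedron f)))
    (haxes : ∀ i : Fin 3, ∃ u ∈ psSupp f, ldot l u = wtPS l f ∧ u i = 0)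
    (g : MvPowerSeries (Fin 3) ℂ) (hg : g ≠ 0)
    (h : AddMonoidAlgebra ℂ (Fin 3 → ℤ))
    (hdiv : ppCoeff l g = convMul (ppCoeff l f) h) :
    (∀ u ∈ h.coeff.support, ∀ i, 0 ≤ u i) ∧
      (g = laurentToPS h * f ∨ wtPS l g < wtPS l (g - laurentToPS h * f)) :=
  principal_part_division_general f l hpos haxes g h hdiv
end
end

section
/- Let N ≥ 1 be an integer and let f = f₀(x,y) + z^N ∈ ℂ[[x,y,z]], where f₀ ∈ ℂ[[x,y]] is nonzero with f₀(0,0) = 0; equivalently, supp(f) ⊆ (ℕ² × {0}) ∪ {(0,0,N)} with (0,0,N) ∈ supp(f) and (0,0,0) ∉ supp(f). Then every compact facet (compact two-dimensional exposed face) of Γ₊(f) contains the point (0,0,N). In particular, any two compact facets of Γ₊(f) intersect, i.e. the Newton diagram of f is bi-stellar. -/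
/-!
A compact face of `Γ₊(f)` exposed by a functional `l` forces `l < 0` on the coordinate vectors,
because `Γ₊(f)` is stable under adding the orthant. If the apex `p` were off the face, `l p` would
be below the maximum, so every point of `supp f + ℝ³₊` attaining the maximum would be a support
point in the plane `z = 0`. The face would then lie in the line `{z = 0, l = max}`, which is
incompatible with it being two-dimensional.
-/

open Pointwise

noncomputable section

section Orthant

variable {ι : Type*} [Fintype ι] [DecidableEq ι] {l : StrongDual ℝ (ι → ℝ)} {c : ι → ℝ}

theorem StrongDual.apply_eq_sum_mul_apply_single (l : StrongDual ℝ (ι → ℝ)) (x : ι → ℝ) :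
    l x = ∑ i, x i * l (Pi.single i 1) := by
  conv_lhs => rw [← Finset.univ_sum_single x]
  simp only [map_sum]
  refine Finset.sum_congr rfl fun i _ => ?_
  rw [← smul_eq_mul, ← map_smul, ← Pi.single_smul', smul_eq_mul, mul_one]

theorem StrongDual.apply_nonpos_of_nonneg (hl : ∀ i, l (Pi.single i 1) < 0) (hc : 0 ≤ c) :
    l c ≤ 0 := by
  rw [l.apply_eq_sum_mul_apply_single]
  exact Finset.sum_nonpos fun i _ => mul_nonpos_of_nonneg_of_nonpos (hc i) (hl i).le

theorem StrongDual.eq_zero_of_nonneg_of_apply_eq_zero (hl : ∀ i, l (Pi.single i 1) < 0)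
    (hc : 0 ≤ c) (h : l c = 0) : c = 0 := by
  rw [l.apply_eq_sum_mul_apply_single] at h
  have hterm := (Finset.sum_eq_zero_iff_of_nonpos
    fun i _ => mul_nonpos_of_nonneg_of_nonpos (hc i) (hl i).le).1 h
  funext i
  exact (mul_eq_zero.1 (hterm i (Finset.mem_univ i))).resolve_right (hl i).ne

end Orthant

theorem StrongDual.apply_lt_zero_of_isBounded_toExposed {E : Type*} [NormedAddCommGroup E]
    [NormedSpace ℝ E] {A : Set E} {l : StrongDual ℝ E} {v : E} (hv : v ≠ 0)
    (hA : ∀ x ∈ A, ∀ t : ℝ, 0 ≤ t → x + t • v ∈ A)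
    (hB : Bornology.IsBounded (l.toExposed A)) (hne : (l.toExposed A).Nonempty) : l v < 0 := by
  by_contra! hlv
  obtain ⟨x₀, hx₀A, hx₀max⟩ := hne
  have hray : ∀ t : ℝ, 0 ≤ t → x₀ + t • v ∈ l.toExposed A := fun t ht =>
    ⟨hA x₀ hx₀A t ht, fun y hy => by
      rw [map_add, map_smul, smul_eq_mul]
      nlinarith [hx₀max y hy]⟩
  obtain ⟨R, hR⟩ := isBounded_iff_forall_norm_le.1 hB
  have hvpos : 0 < ‖v‖ := norm_pos_iff.2 hv
  set t := (R + ‖x₀‖ + 1) / ‖v‖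
  have ht : 0 ≤ t :=
    div_nonneg (by linarith [norm_nonneg x₀, hR x₀ ⟨hx₀A, hx₀max⟩]) hvpos.le
  have hnorm : ‖t • v‖ = R + ‖x₀‖ + 1 := by
    rw [norm_smul, Real.norm_of_nonneg ht, div_mul_cancel₀ _ hvpos.ne']
  have := norm_sub_le (x₀ + t • v) x₀
  rw [add_sub_cancel_left, hnorm] at this
  linarith [hR _ (hray t ht)]

theorem convexHull_add_subset_of_add_subset {E : Type*} [AddCommGroup E] [Module ℝ E]
    {S C : Set E} (hC : Convex ℝ C) (hCC : C + C ⊆ C) :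
    convexHull ℝ (S + C) + C ⊆ convexHull ℝ (S + C) :=
  calc convexHull ℝ (S + C) + C = convexHull ℝ (S + C + C) := by
        rw [convexHull_add (S + C) C, hC.convexHull_eq]
    _ ⊆ convexHull ℝ (S + C) :=
        convexHull_mono (by rw [add_assoc]; exact Set.add_subset_add_left hCC)

theorem StrongDual.convex_setOf_lt_union_inter_setOf_eq {E : Type*} [AddCommGroup E]
    [Module ℝ E] [TopologicalSpace E] (l : StrongDual ℝ E) (m : ℝ) {B : Set E}
    (hB : Convex ℝ B) : Convex ℝ ({x | l x < m} ∪ (B ∩ {x | l x = m})) := by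
  intro x hx y hy a b ha hb hab
  rcases ha.eq_or_lt with rfl | ha
  · rw [zero_add] at hab; subst hab; simpa using hy
  rcases hb.eq_or_lt with rfl | hb
  · rw [add_zero] at hab; subst hab; simpa using hx
  have hxm : l x ≤ m := by rcases hx with hx | hx <;> [exact hx.le; exact hx.2.le]
  have hym : l y ≤ m := by rcases hy with hy | hy <;> [exact hy.le; exact hy.2.le]
  have hcomb : l (a • x + b • y) = a * l x + b * l y := by simp
  have hm : m = a * m + b * m := by rw [← add_mul, hab, one_mul]
  have hax := mul_le_mul_of_nonneg_left hxm ha.le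
  have hby := mul_le_mul_of_nonneg_left hym hb.le
  by_cases hlt : l (a • x + b • y) < m
  · exact Or.inl hlt
  rw [hcomb] at hlt
  have hxB : x ∈ B ∩ {x | l x = m} := hx.resolve_left fun h =>
    hlt (by linarith [mul_lt_mul_of_pos_left (show l x < m from h) ha])
  have hyB : y ∈ B ∩ {x | l x = m} := hy.resolve_left fun h =>
    hlt (by linarith [mul_lt_mul_of_pos_left (show l y < m from h) hb])
  exact Or.inr ((hB.inter (convex_hyperplane l.toLinearMap.isLinear m)) hxB hyB ha.le hb.le hab)

theorem StrongDual.collinear_setOf_apply_two_eq_zero_inter_setOf_eq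
    (l : StrongDual ℝ (Fin 3 → ℝ)) (m : ℝ) (hl : l (Pi.single 1 1) ≠ 0) :
    Collinear ℝ ({x : Fin 3 → ℝ | x 2 = 0} ∩ {x | l x = m}) := by
  rw [collinear_iff_exists_forall_eq_smul_vadd]
  refine ⟨![0, m / l (Pi.single 1 1), 0], ![1, -l (Pi.single 0 1) / l (Pi.single 1 1), 0],
    fun x ⟨hx2, hxm⟩ => ⟨x 0, ?_⟩⟩
  simp only [Set.mem_ofPred_eq] at hx2 hxm
  rw [l.apply_eq_sum_mul_apply_single, Fin.sum_univ_three] at hxm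
  funext j
  fin_cases j
  · simp
  · simp only [Fin.mk_one, Matrix.smul_cons, smul_eq_mul, mul_one, mul_zero, Matrix.smul_empty,
      Pi.vadd_apply', Matrix.cons_val_one, Matrix.cons_val_zero, vadd_eq_add]
    field_simp
    rw [hx2] at hxm
    linarith
  · simp [hx2]

theorem Set.nonempty_of_finrank_vectorSpan_ne_zero {E : Type*} [AddCommGroup E] [Module ℝ E]
    {s : Set E} (h : Module.finrank ℝ (vectorSpan ℝ s) ≠ 0) : s.Nonempty :=
  Set.nonempty_iff_ne_empty.2 fun hs => h (by rw [hs, vectorSpan_empty, finrank_bot])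

theorem mem_of_isCompactFacet_convexHull_add_orthant {S : Set (Fin 3 → ℝ)} {p : Fin 3 → ℝ}
    (hp : p ∈ S) (hS : ∀ s ∈ S, s 2 = 0 ∨ s = p) {F : Set (Fin 3 → ℝ)}
    (hF : IsCompactFacet (convexHull ℝ (S + {v | ∀ i, 0 ≤ v i})) F) : p ∈ F := by
  set O : Set (Fin 3 → ℝ) := {v | ∀ i, 0 ≤ v i}
  obtain ⟨hexp, hcomp, hdim⟩ := hF
  have hne : F.Nonempty := Set.nonempty_of_finrank_vectorSpan_ne_zero (by omega)
  obtain ⟨l, hl⟩ := hexp hne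
  change F = l.toExposed _ at hl
  subst hl
  have hOO : O + O ⊆ O := by
    rintro _ ⟨u, hu, v, hv, rfl⟩ i
    exact add_nonneg (hu i) (hv i)
  have hSP : S ⊆ convexHull ℝ (S + O) := fun s hs =>
    subset_convexHull ℝ _ ⟨s, hs, 0, fun _ => le_rfl, add_zero s⟩
  have hneg : ∀ i, l (Pi.single i 1) < 0 := fun i =>
    l.apply_lt_zero_of_isBounded_toExposed (Pi.single_ne_zero_iff.2 one_ne_zero)
      (fun x hx t ht => convexHull_add_subset_of_add_subset (C := O) (convex_Ici 0) hOO
        (Set.add_mem_add hx (Pi.le_def.1 (smul_nonneg ht (Pi.single_nonneg.2 zero_le_one)))))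
      hcomp.isBounded hne
  obtain ⟨x₀, hx₀P, hx₀max⟩ := hne
  by_contra hpF
  have hlp : l p < l x₀ := (hx₀max p (hSP hp)).lt_of_ne fun h =>
    hpF ⟨hSP hp, fun y hy => h ▸ hx₀max y hy⟩
  set L : Set (Fin 3 → ℝ) := {x | x 2 = 0} ∩ {x | l x = l x₀}
  have hSO : S + O ⊆ {x | l x < l x₀} ∪ L := by
    rintro _ ⟨s, hs, c, hc, rfl⟩
    refine or_iff_not_imp_left.2 fun hlt => ?_
    rw [Set.mem_ofPred_eq, map_add, not_lt] at hlt
    have hls := hx₀max s (hSP hs)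
    have hlc := l.apply_nonpos_of_nonneg hneg hc
    obtain rfl : c = 0 := l.eq_zero_of_nonneg_of_apply_eq_zero hneg hc (by linarith)
    have hs2 : s 2 = 0 := (hS s hs).resolve_right (by rintro rfl; linarith)
    exact ⟨by simpa using hs2, by simp only [add_zero, Set.mem_ofPred_eq]; linarith⟩
  have hFL : l.toExposed (convexHull ℝ (S + O)) ⊆ L := fun x hx =>
    (convexHull_min hSO (l.convex_setOf_lt_union_inter_setOf_eq _
      (convex_hyperplane (LinearMap.proj 2 : (Fin 3 → ℝ) →ₗ[ℝ] ℝ).isLinear 0)) hx.1).resolve_left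
      (not_lt.2 (hx.2 x₀ hx₀P))
  have := ((l.collinear_setOf_apply_two_eq_zero_inter_setOf_eq _ (hneg 1).ne).subset
    hFL).finrank_le_one
  omega

theorem suspension_facets_contain_apex_general
    (N : ℕ)
    (f : MvPowerSeries (Fin 3) ℂ)
    (hsupp : ∀ u ∈ psSupp f, u 2 = 0 ∨ u = Finsupp.single (2 : Fin 3) N)
    (hzN : Finsupp.single (2 : Fin 3) N ∈ psSupp f) :
    (∀ F, IsCompactFacet (newtonPolyhedron f) F → ![(0:ℝ), 0, (N : ℝ)] ∈ F) ∧
    (∀ F F', IsCompactFacet (newtonPolyhedron f) F →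
      IsCompactFacet (newtonPolyhedron f) F' → (F ∩ F').Nonempty) := by
  have hapex : expR (Finsupp.single 2 N) = ![0, 0, (N : ℝ)] := by
    funext i; fin_cases i <;> simp [expR]
  have hS : ∀ s ∈ expR '' psSupp f, s 2 = 0 ∨ s = ![0, 0, (N : ℝ)] := by
    rintro _ ⟨u, hu, rfl⟩
    rcases hsupp u hu with hu2 | rfl
    · exact Or.inl (by simp [expR, hu2])
    · exact Or.inr hapex
  have hfacet : ∀ F, IsCompactFacet (newtonPolyhedron f) F → ![(0:ℝ), 0, (N : ℝ)] ∈ F :=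
    fun _ => mem_of_isCompactFacet_convexHull_add_orthant (S := expR '' psSupp f)
      ⟨_, hzN, hapex⟩ hS
  exact ⟨hfacet, fun F F' hF hF' => ⟨_, hfacet F hF, hfacet F' hF'⟩⟩

/-- Let `N ≥ 1` and `f = f₀(x,y) + z^N` with `f₀` nonzero, `f₀(0,0) = 0`;
equivalently `supp f ⊆ (ℕ² × {0}) ∪ {(0,0,N)}` with `(0,0,N) ∈ supp f` and
`(0,0,0) ∉ supp f`.  Then every compact facet of `Γ₊(f)` contains the point `(0,0,N)`;
in particular any two compact facets of `Γ₊(f)` intersect (the diagram is bi-stellar). -/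
theorem suspension_facets_contain_apex
    (N : ℕ) (hN : 1 ≤ N)
    (f : MvPowerSeries (Fin 3) ℂ) (hf : f ≠ 0)
    (hsupp : ∀ u ∈ psSupp f, u 2 = 0 ∨ u = Finsupp.single (2 : Fin 3) N)
    (hzN : Finsupp.single (2 : Fin 3) N ∈ psSupp f)
    (h0 : (0 : Fin 3 →₀ ℕ) ∉ psSupp f) :
    (∀ F, IsCompactFacet (newtonPolyhedron f) F → ![(0:ℝ), 0, (N : ℝ)] ∈ F) ∧
    (∀ F F', IsCompactFacet (newtonPolyhedron f) F →
      IsCompactFacet (newtonPolyhedron f) F' → (F ∩ F').Nonempty) :=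
  suspension_facets_contain_apex_general N f hsupp hzN
end
end
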